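/- arXiv:2501.16336 — 4 statements merged into one kernel-verified Lean document; each statement's English description precedes it below -/
import Mathlib

section
/- Fix an even integer n = 2a with a ≥ 1. The Pareto set of the bi-objective maximization problem AORZ(x) = (f11(x), f12(x)) over x ∈ {0,1}^n is exactly the set {x ∈ {0,1}^n : x_i = 1 for all 1 ≤ i ≤ n/2} (all solutions whose first half is all ones), and this set has cardinality 2^{n/2}. -/
/-- Number of ones in the second half of `x` (indices `a ≤ i < 2a`). -/
def f11 (a : ℕ) (x : Fin (2 * a) → Bool) : ℕ :=
  ∑ i : Fin (2 * a), if a ≤ (i : ℕ) ∧ x i = true then 1 else 0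

/-- Ones in the first half plus zeros in the second half. -/
def f12 (a : ℕ) (x : Fin (2 * a) → Bool) : ℕ :=
  ∑ i : Fin (2 * a),
    if ((i : ℕ) < a ∧ x i = true) ∨ (a ≤ (i : ℕ) ∧ x i = false) then 1 else 0

def AORZ (a : ℕ) (x : Fin (2 * a) → Bool) : ℕ × ℕ := (f11 a x, f12 a x)

/-- `u` dominates `v` for bi-objective maximization. -/
def dominates (u v : ℕ × ℕ) : Prop := (v.1 ≤ u.1 ∧ v.2 ≤ u.2) ∧ u ≠ v

/-- Pareto set (maximization) of an objective `F` on bit strings of length `2a`. -/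
def paretoSet (a : ℕ) (F : (Fin (2 * a) → Bool) → ℕ × ℕ) : Set (Fin (2 * a) → Bool) :=
  {x | ¬ ∃ y : Fin (2 * a) → Bool, dominates (F y) (F x)}

/-- Number of ones in the first half. -/
def gg (a : ℕ) (x : Fin (2 * a) → Bool) : ℕ :=
  ∑ i : Fin (2 * a), if (i : ℕ) < a ∧ x i = true then 1 else 0

lemma count_ge (a : ℕ) : ∑ i : Fin (2*a), (if (i:ℕ) < a then (0:ℕ) else 1) = a := by
  rw [Fin.sum_univ_eq_sum_range (fun n => if n < a then (0:ℕ) else 1)]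
  rw [← Finset.sum_range_add_sum_Ico _ (by omega : a ≤ 2*a)]
  have h1 : ∑ i ∈ Finset.range a, (if i < a then (0:ℕ) else 1) = 0 :=
    Finset.sum_eq_zero fun i hi => by simp [Finset.mem_range.mp hi]
  have h2 : ∑ i ∈ Finset.Ico a (2*a), (if i < a then (0:ℕ) else 1)
      = ∑ i ∈ Finset.Ico a (2*a), (1:ℕ) :=
    Finset.sum_congr rfl fun i hi => by
      have := Finset.mem_Ico.mp hi; simp; omega
  rw [h1, h2]
  simp [Nat.card_Ico]
  omega

lemma count_lt (a : ℕ) : ∑ i : Fin (2*a), (if (i:ℕ) < a then (1:ℕ) else 0) = a := by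
  rw [Fin.sum_univ_eq_sum_range (fun n => if n < a then (1:ℕ) else 0)]
  rw [← Finset.sum_range_add_sum_Ico _ (by omega : a ≤ 2*a)]
  have h1 : ∑ i ∈ Finset.range a, (if i < a then (1:ℕ) else 0)
      = ∑ i ∈ Finset.range a, (1:ℕ) :=
    Finset.sum_congr rfl fun i hi => by simp [Finset.mem_range.mp hi]
  have h2 : ∑ i ∈ Finset.Ico a (2*a), (if i < a then (1:ℕ) else 0) = 0 :=
    Finset.sum_eq_zero fun i hi => by
      have := Finset.mem_Ico.mp hi; simp; omega
  rw [h1, h2]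
  simp

lemma key (a : ℕ) (x : Fin (2*a) → Bool) : f11 a x + f12 a x = gg a x + a := by
  have h : f11 a x + f12 a x
      = gg a x + ∑ i : Fin (2*a), (if (i:ℕ) < a then (0:ℕ) else 1) := by
    rw [f11, f12, gg, ← Finset.sum_add_distrib, ← Finset.sum_add_distrib]
    apply Finset.sum_congr rfl
    intro i _
    by_cases h : (i:ℕ) < a <;> cases hx : x i <;>
      simp [h, hx, show a ≤ (i:ℕ) ↔ ¬ ((i:ℕ) < a) from by omega]
  have := count_ge a
  omega

lemma gg_le (a : ℕ) (x : Fin (2*a) → Bool) : gg a x ≤ a := by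
  have h : gg a x ≤ ∑ i : Fin (2*a), (if (i:ℕ) < a then (1:ℕ) else 0) := by
    apply Finset.sum_le_sum
    intro i _
    by_cases h : (i:ℕ) < a <;> cases hx : x i <;> simp [h, hx]
  have := count_lt a
  omega

lemma gg_eq (a : ℕ) (x : Fin (2*a) → Bool) (h : ∀ i : Fin (2*a), (i:ℕ) < a → x i = true) :
    gg a x = a := by
  have h2 : gg a x = ∑ i : Fin (2*a), (if (i:ℕ) < a then (1:ℕ) else 0) := by
    apply Finset.sum_congr rfl
    intro i _
    by_cases hi : (i:ℕ) < a <;> simp [hi, h i]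
  rw [h2, count_lt]

lemma f11_update (a : ℕ) (x : Fin (2*a) → Bool) (i : Fin (2*a)) (hi : (i:ℕ) < a) :
    f11 a (Function.update x i true) = f11 a x := by
  apply Finset.sum_congr rfl
  intro j _
  by_cases hj : j = i
  · subst hj
    simp [show ¬ a ≤ (j:ℕ) by omega]
  · rw [Function.update_of_ne hj]

lemma f12_update (a : ℕ) (x : Fin (2*a) → Bool) (i : Fin (2*a)) (hi : (i:ℕ) < a)
    (hx : x i = false) :
    f12 a (Function.update x i true) = f12 a x + 1 := by
  rw [f12, f12, ← Finset.sum_erase_add _ _ (Finset.mem_univ i),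
    ← Finset.sum_erase_add _ _ (Finset.mem_univ i)]
  have hcong : ∀ j ∈ Finset.univ.erase i,
      (if ((j:ℕ) < a ∧ Function.update x i true j = true)
          ∨ (a ≤ (j:ℕ) ∧ Function.update x i true j = false) then (1:ℕ) else 0)
      = (if ((j:ℕ) < a ∧ x j = true) ∨ (a ≤ (j:ℕ) ∧ x j = false) then 1 else 0) := by
    intro j hj
    rw [Function.update_of_ne (Finset.mem_erase.mp hj).1]
  rw [Finset.sum_congr rfl hcong]
  simp [hi, hx, show ¬ a ≤ (i:ℕ) by omega]

theorem aorz_pareto_set (a : ℕ) (ha : 1 ≤ a) :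
    paretoSet a (AORZ a) = {x | ∀ i : Fin (2 * a), (i : ℕ) < a → x i = true} ∧
    (paretoSet a (AORZ a)).ncard = 2 ^ a := by
  have hset : paretoSet a (AORZ a)
      = {x | ∀ i : Fin (2 * a), (i : ℕ) < a → x i = true} := by
    ext x
    simp only [paretoSet, Set.mem_setOf_eq]
    constructor
    · intro hp i hi
      by_contra hxi
      have hx : x i = false := by cases h : x i <;> simp_all
      apply hp
      refine ⟨Function.update x i true, ⟨⟨?_, ?_⟩, ?_⟩⟩
      · simp only [AORZ]
        rw [f11_update a x i hi]
      · simp only [AORZ]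
        rw [f12_update a x i hi hx]
        omega
      · simp only [AORZ]
        intro hcontra
        have h2 := congrArg Prod.snd hcontra
        simp only at h2
        rw [f12_update a x i hi hx] at h2
        omega
    · rintro hall ⟨y, ⟨⟨h1, h2⟩, hne⟩⟩
      simp only [AORZ] at h1 h2 hne
      have k1 := key a x
      have k2 := key a y
      have g1 := gg_eq a x hall
      have g2 := gg_le a y
      apply hne
      have e1 : f11 a y = f11 a x := by omega
      have e2 : f12 a y = f12 a x := by omega
      rw [e1, e2]
  refine ⟨hset, ?_⟩
  rw [hset]
  have E2 : {i : Fin (2*a) // a ≤ (i:ℕ)} ≃ Fin a :=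
    { toFun := fun i => ⟨(i:ℕ) - a, by have := i.1.isLt; have := i.2; omega⟩
      invFun := fun j => ⟨⟨(j:ℕ) + a, by have := j.isLt; omega⟩, by simp⟩
      left_inv := fun i => Subtype.ext (Fin.ext (by have := i.2; simp; omega))
      right_inv := fun j => Fin.ext (by simp) }
  have E : {x : Fin (2*a) → Bool | ∀ i : Fin (2*a), (i:ℕ) < a → x i = true}
      ≃ ({i : Fin (2*a) // a ≤ (i:ℕ)} → Bool) :=
    { toFun := fun x j => x.1 j.1
      invFun := fun g => ⟨fun i => if h : a ≤ (i:ℕ) then g ⟨i, h⟩ else true,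
        fun i hi => by simp [show ¬ a ≤ (i:ℕ) by omega]⟩
      left_inv := fun x => Subtype.ext (funext fun i => by
        by_cases h : a ≤ (i:ℕ)
        · simp [h]
        · simp [h, x.2 i (by omega)])
      right_inv := fun g => funext fun j => by simp [j.2] }
  rw [← Nat.card_coe_set_eq, Nat.card_congr E, Nat.card_eq_fintype_card,
    Fintype.card_fun, Fintype.card_bool, Fintype.card_congr E2, Fintype.card_fin]
end

section
/- Fix an even integer n = 2a with a ≥ 1. The Pareto front of the bi-objective maximization problem AORZ(x) = (f11(x), f12(x)) over x ∈ {0,1}^n is exactly the set {(j, n − j) : j ∈ {0, 1, …, n/2}}, which has cardinality n/2 + 1. -/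
def xw (a j : ℕ) : Fin (2 * a) → Bool := fun i => decide ((i : ℕ) < a + j)

lemma f11_le (a : ℕ) (x : Fin (2 * a) → Bool) : f11 a x ≤ a := by
  unfold f11
  calc ∑ i : Fin (2 * a), (if a ≤ (i : ℕ) ∧ x i = true then 1 else 0)
      ≤ ∑ i : Fin (2 * a), (if a ≤ (i : ℕ) then 1 else 0) := by
        apply Finset.sum_le_sum
        intro i _
        split_ifs <;> simp_all
    _ = ∑ m ∈ Finset.range (2 * a), (if a ≤ m then 1 else 0) :=
        Fin.sum_univ_eq_sum_range (fun m => if a ≤ m then 1 else 0) (2 * a)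
    _ = (Finset.filter (fun m => a ≤ m) (Finset.range (2 * a))).card :=
        (Finset.card_filter _ _).symm
    _ = a := by
        have : Finset.filter (fun m => a ≤ m) (Finset.range (2 * a)) = Finset.Ico a (2 * a) := by
          ext m; simp [Finset.mem_Ico]; omega
        rw [this, Nat.card_Ico]; omega

lemma f_sum_le (a : ℕ) (x : Fin (2 * a) → Bool) : f11 a x + f12 a x ≤ 2 * a := by
  unfold f11 f12
  rw [← Finset.sum_add_distrib]
  calc (∑ i : Fin (2 * a), ((if a ≤ (i : ℕ) ∧ x i = true then 1 else 0) +
        (if ((i : ℕ) < a ∧ x i = true) ∨ (a ≤ (i : ℕ) ∧ x i = false) then 1 else 0)))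
      ≤ ∑ _i : Fin (2 * a), 1 := by
        apply Finset.sum_le_sum
        intro i _
        split_ifs with h1 h2 <;> try omega
        exfalso
        rcases h2 with ⟨h, _⟩ | ⟨_, h⟩
        · omega
        · simp_all
    _ = 2 * a := by simp

lemma f11_xw (a j : ℕ) (hj : j ≤ a) : f11 a (xw a j) = j := by
  unfold f11 xw
  simp only [decide_eq_true_eq]
  rw [Fin.sum_univ_eq_sum_range (fun m => if a ≤ m ∧ m < a + j then (1:ℕ) else 0) (2 * a),
    ← Finset.card_filter]
  have : Finset.filter (fun m => a ≤ m ∧ m < a + j) (Finset.range (2 * a))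
      = Finset.Ico a (a + j) := by
    ext m; simp [Finset.mem_Ico]; omega
  rw [this, Nat.card_Ico]; omega

lemma f12_xw (a j : ℕ) (hj : j ≤ a) : f12 a (xw a j) = 2 * a - j := by
  unfold f12 xw
  simp only [decide_eq_true_eq, decide_eq_false_iff_not]
  rw [Fin.sum_univ_eq_sum_range
      (fun m => if (m < a ∧ m < a + j) ∨ (a ≤ m ∧ ¬ m < a + j) then (1:ℕ) else 0) (2 * a),
    ← Finset.card_filter]
  have heq : Finset.filter (fun m => (m < a ∧ m < a + j) ∨ (a ≤ m ∧ ¬ m < a + j))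
      (Finset.range (2 * a)) = Finset.range a ∪ Finset.Ico (a + j) (2 * a) := by
    ext m; simp [Finset.mem_Ico]; omega
  rw [heq, Finset.card_union_of_disjoint, Finset.card_range, Nat.card_Ico]
  · omega
  · simp [Finset.disjoint_left]; omega

lemma AORZ_xw (a j : ℕ) (hj : j ≤ a) : AORZ a (xw a j) = (j, 2 * a - j) := by
  simp [AORZ, f11_xw a j hj, f12_xw a j hj]

lemma xw_pareto (a j : ℕ) (hj : j ≤ a) : xw a j ∈ paretoSet a (AORZ a) := by
  intro ⟨y, hy⟩
  rw [AORZ_xw a j hj] at hy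
  obtain ⟨⟨h1, h2⟩, hne⟩ := hy
  have hs := f_sum_le a y
  apply hne
  have : f11 a y = j ∧ f12 a y = 2 * a - j := by
    simp only [AORZ] at h1 h2 ⊢
    omega
  simp [AORZ, this.1, this.2]

theorem aorz_pareto_front (a : ℕ) (ha : 1 ≤ a) :
    AORZ a '' paretoSet a (AORZ a) = {p : ℕ × ℕ | ∃ j ≤ a, p = (j, 2 * a - j)} ∧
    (AORZ a '' paretoSet a (AORZ a)).ncard = a + 1 := by
  have hmain : AORZ a '' paretoSet a (AORZ a) = {p : ℕ × ℕ | ∃ j ≤ a, p = (j, 2 * a - j)} := by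
    ext p
    constructor
    · rintro ⟨x, hx, rfl⟩
      refine ⟨f11 a x, f11_le a x, ?_⟩
      have h2 : f12 a x = 2 * a - f11 a x := by
        by_contra hne
        have hlt : f12 a x < 2 * a - f11 a x := by
          have := f_sum_le a x
          have := f11_le a x
          omega
        exact hx ⟨xw a (f11 a x), by
          rw [AORZ_xw a _ (f11_le a x)]
          exact ⟨⟨le_refl _, le_of_lt hlt⟩, by
            simp only [AORZ, Prod.mk.injEq, ne_eq, not_and]
            intro _; omega⟩⟩
      simp [AORZ, h2]
    · rintro ⟨j, hj, rfl⟩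
      exact ⟨xw a j, xw_pareto a j hj, AORZ_xw a j hj⟩
  refine ⟨hmain, ?_⟩
  rw [hmain]
  have hset : {p : ℕ × ℕ | ∃ j ≤ a, p = (j, 2 * a - j)} =
      ↑((Finset.range (a + 1)).image (fun j => (j, 2 * a - j))) := by
    ext p
    simp [Finset.mem_image, Finset.mem_range]
    constructor
    · rintro ⟨j, hj, rfl⟩; exact ⟨j, by omega, rfl⟩
    · rintro ⟨j, hj, rfl⟩; exact ⟨j, by omega, rfl⟩
  rw [hset, Set.ncard_coe_finset, Finset.card_image_of_injective, Finset.card_range]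
  intro x y h
  exact (Prod.mk.injEq _ _ _ _).mp h |>.1
end

section
/- Fix an even integer n = 2a with a ≥ 1. The Pareto set of the bi-objective maximization problem AOFZ(x) = (f21(x), f22(x)) over x ∈ {0,1}^n is exactly the set {x ∈ {0,1}^n : x_i = 1 for all n/2 + 1 ≤ i ≤ n} (all solutions whose second half is all ones), and this set has cardinality 2^{n/2}. -/
/-- Zeros in the first half plus ones in the second half. -/
def f21 (a : ℕ) (x : Fin (2 * a) → Bool) : ℕ :=
  ∑ i : Fin (2 * a),
    if ((i : ℕ) < a ∧ x i = false) ∨ (a ≤ (i : ℕ) ∧ x i = true) then 1 else 0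

/-- Number of ones in the first half of `x` (indices `i < a`). -/
def f22 (a : ℕ) (x : Fin (2 * a) → Bool) : ℕ :=
  ∑ i : Fin (2 * a), if (i : ℕ) < a ∧ x i = true then 1 else 0

def AOFZ (a : ℕ) (x : Fin (2 * a) → Bool) : ℕ × ℕ := (f21 a x, f22 a x)

lemma sum_update_aux {n : ℕ} (g : Fin n → Bool → ℕ) (x : Fin n → Bool) (j : Fin n) (b : Bool) :
    ∑ i, g i (Function.update x j b i) = (∑ i ∈ Finset.univ.erase j, g i (x i)) + g j b := by
  rw [← Finset.sum_erase_add _ _ (Finset.mem_univ j), Function.update_self]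
  congr 1
  refine Finset.sum_congr rfl fun i hi => ?_
  rw [Function.update_of_ne (Finset.ne_of_mem_erase hi)]

lemma sum_bound (a : ℕ) (x : Fin (2 * a) → Bool) : f21 a x + f22 a x ≤ 2 * a := by
  unfold f21 f22
  rw [← Finset.sum_add_distrib]
  calc ∑ i : Fin (2 * a), ((if ((i : ℕ) < a ∧ x i = false) ∨ (a ≤ (i : ℕ) ∧ x i = true) then 1 else 0)
        + (if (i : ℕ) < a ∧ x i = true then 1 else 0))
      ≤ ∑ _i : Fin (2 * a), 1 := by
        refine Finset.sum_le_sum fun i _ => ?_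
        rcases Nat.lt_or_ge (i : ℕ) a with h | h <;> cases hx : x i <;>
          simp [h, hx, Nat.not_lt.mpr, Nat.not_le.mpr] <;> omega
    _ = 2 * a := by simp

lemma sum_eq (a : ℕ) (x : Fin (2 * a) → Bool)
    (hx : ∀ i : Fin (2 * a), a ≤ (i : ℕ) → x i = true) :
    f21 a x + f22 a x = 2 * a := by
  unfold f21 f22
  rw [← Finset.sum_add_distrib]
  calc ∑ i : Fin (2 * a), ((if ((i : ℕ) < a ∧ x i = false) ∨ (a ≤ (i : ℕ) ∧ x i = true) then 1 else 0)
        + (if (i : ℕ) < a ∧ x i = true then 1 else 0))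
      = ∑ _i : Fin (2 * a), 1 := by
        refine Finset.sum_congr rfl fun i _ => ?_
        rcases Nat.lt_or_ge (i : ℕ) a with h | h
        · cases hxi : x i <;> simp [h, hxi, Nat.not_le.mpr h]
        · simp [h, hx i h, Nat.not_lt.mpr h]
    _ = 2 * a := by simp

def restrictEquiv (a : ℕ) :
    {x : Fin (2 * a) → Bool // ∀ i : Fin (2 * a), a ≤ (i : ℕ) → x i = true} ≃ (Fin a → Bool) where
  toFun x i := x.1 ⟨(i : ℕ), by have := i.isLt; omega⟩
  invFun f := ⟨fun i => if h : (i : ℕ) < a then f ⟨(i : ℕ), h⟩ else true,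
    fun i hi => by simp [Nat.not_lt.mpr hi]⟩
  left_inv x := by
    ext i
    by_cases h : (i : ℕ) < a
    · simp [h]
    · simp [h, x.2 i (Nat.le_of_not_lt h)]
  right_inv f := by
    ext i
    simp [i.isLt]

theorem aofz_pareto_set (a : ℕ) (ha : 1 ≤ a) :
    paretoSet a (AOFZ a) = {x | ∀ i : Fin (2 * a), a ≤ (i : ℕ) → x i = true} ∧
    (paretoSet a (AOFZ a)).ncard = 2 ^ a := by
  have hset : paretoSet a (AOFZ a) = {x | ∀ i : Fin (2 * a), a ≤ (i : ℕ) → x i = true} := by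
    ext x
    simp only [paretoSet, Set.mem_setOf_eq]
    constructor
    · intro h i hi
      by_contra hfalse
      have hxi : x i = false := Bool.not_eq_true (x i) ▸ hfalse
      apply h
      refine ⟨Function.update x i true, ⟨?_, ?_⟩, ?_⟩
      all_goals {
        have h21y : f21 a (Function.update x i true) =
            (∑ k ∈ Finset.univ.erase i,
              (if ((k : ℕ) < a ∧ x k = false) ∨ (a ≤ (k : ℕ) ∧ x k = true) then 1 else 0)) + 1 := by
          have := sum_update_aux
            (fun k b => if ((k : ℕ) < a ∧ b = false) ∨ (a ≤ (k : ℕ) ∧ b = true) then 1 else 0)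
            x i true
          simpa [f21, hi, Nat.not_lt.mpr hi] using this
        have h21x : f21 a x =
            (∑ k ∈ Finset.univ.erase i,
              (if ((k : ℕ) < a ∧ x k = false) ∨ (a ≤ (k : ℕ) ∧ x k = true) then 1 else 0)) := by
          rw [f21, ← Finset.sum_erase_add _ _ (Finset.mem_univ i)]
          simp [hxi, Nat.not_lt.mpr hi]
        have h22y : f22 a (Function.update x i true) = f22 a x := by
          have := sum_update_aux (fun k b => if (k : ℕ) < a ∧ b = true then 1 else 0) x i true
          rw [f22, this, f22, ← Finset.sum_erase_add _ _ (Finset.mem_univ i)]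
          simp [Nat.not_lt.mpr hi]
        simp only [AOFZ]
        first
        | (simp [h21y, h21x, h22y])
        | (intro hcontra
           have := congrArg Prod.fst hcontra
           simp [h21y, h21x] at this)
      }
    · rintro hx ⟨y, ⟨h1, h2⟩, hne⟩
      have hb := sum_bound a y
      have he := sum_eq a x hx
      simp only [AOFZ] at h1 h2 hne
      have h21 : f21 a y = f21 a x := by omega
      have h22 : f22 a y = f22 a x := by omega
      exact hne (by rw [h21, h22])
  refine ⟨hset, ?_⟩
  rw [hset, ← Nat.card_coe_set_eq]
  exact (Nat.card_congr (restrictEquiv a)).trans (by simp [Nat.card_eq_fintype_card])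
end

section
/- Let G be a directed graph with vertex set V and edge set E ⊆ V × V, and let there be M parties, party m having an edge-weight function w_m : E → ℝ^{k_m} with all components positive. If the path x = (v_0, v_1, …, v_{l−1}, v_l) with l ≥ 1 is a common Pareto-optimal path from v_0 to v_l (i.e., for every party m, no path from v_0 to v_l dominates x with respect to F_m), then the prefix x' = (v_0, v_1, …, v_{l−1}) is a common Pareto-optimal path from v_0 to v_{l−1} (for every party m, no path from v_0 to v_{l−1} dominates x' with respect to F_m). -/
/-- Objective vector (for party `m`'s weights `w`) of the path given by the first
`l` steps of the vertex sequence `p`. -/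
def pathObj {V : Type*} {k : ℕ} (w : V × V → Fin k → ℝ) (p : ℕ → V) (l : ℕ) :
    Fin k → ℝ :=
  fun i => ∑ j ∈ Finset.range l, w (p j, p (j + 1)) i

theorem common_shortest_path_optimal_substructure
    {V : Type*} (E : Set (V × V)) (M : ℕ) (k : Fin M → ℕ)
    (w : (m : Fin M) → V × V → Fin (k m) → ℝ)
    (hw : ∀ m : Fin M, ∀ e ∈ E, ∀ i, 0 < w m e i)
    (p : ℕ → V) (l : ℕ) (hl : 1 ≤ l)
    (hpath : ∀ j < l, (p j, p (j + 1)) ∈ E)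
    (hopt : ∀ m : Fin M, ¬ ∃ (q : ℕ → V) (l' : ℕ),
        q 0 = p 0 ∧ q l' = p l ∧ (∀ j < l', (q j, q (j + 1)) ∈ E) ∧
        (∀ i, pathObj (w m) q l' i ≤ pathObj (w m) p l i) ∧
        pathObj (w m) q l' ≠ pathObj (w m) p l) :
    ∀ m : Fin M, ¬ ∃ (q : ℕ → V) (l' : ℕ),
        q 0 = p 0 ∧ q l' = p (l - 1) ∧ (∀ j < l', (q j, q (j + 1)) ∈ E) ∧
        (∀ i, pathObj (w m) q l' i ≤ pathObj (w m) p (l - 1) i) ∧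
        pathObj (w m) q l' ≠ pathObj (w m) p (l - 1) := by
  intro m ⟨q, l', h0, hend, hedge, hle, hne⟩
  apply hopt m
  -- objective computations
  have key : ∀ i, pathObj (w m) (fun j => if j ≤ l' then q j else p l) (l' + 1) i
      = pathObj (w m) q l' i + w m (p (l - 1), p l) i := by
    intro i
    unfold pathObj
    rw [Finset.sum_range_succ]
    congr 1
    · apply Finset.sum_congr rfl
      intro j hj
      simp only [Finset.mem_range] at hj
      simp [hj.le, Nat.succ_le_of_lt hj]
    · simp [hend]
  have keyp : ∀ i, pathObj (w m) p l i = pathObj (w m) p (l - 1) i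
      + w m (p (l - 1), p l) i := by
    intro i
    unfold pathObj
    conv_lhs => rw [show l = (l - 1) + 1 by omega]
    rw [Finset.sum_range_succ, show l - 1 + 1 = l by omega]
  -- extend q by the last edge of p
  refine ⟨fun j => if j ≤ l' then q j else p l, l' + 1, ?_, ?_, ?_, ?_, ?_⟩
  · simpa using h0
  · simp
  · intro j hj
    rcases lt_or_eq_of_le (Nat.lt_succ_iff.mp hj) with hj' | hj'
    · simp only [hj'.le, (Nat.succ_le_of_lt hj'), if_pos]
      exact hedge j hj'
    · subst hj'
      simp only [le_refl, if_pos, Nat.not_succ_le_self, if_neg, hend, if_false]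
      have := hpath (l - 1) (by omega)
      rw [show l - 1 + 1 = l from by omega] at this
      simpa using this
  · intro i
    rw [key, keyp]
    exact add_le_add (hle i) le_rfl
  · intro h
    apply hne
    funext i
    have := congrFun h i
    rw [key, keyp] at this
    linarith
end
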